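/- Let n ≥ 1 and let S ⊆ {1,…,2n} be a subset of cardinality n. Then sgn(σ_S) = (−1)^(ΣS + ⌈n/2⌉), where ΣS denotes the sum of the elements of S and ⌈·⌉ the ceiling function. -/

import Mathlib

/-!
If `a ∉ S` and `a + 1 ∈ S`, replacing `a + 1` by `a` lowers `ΣS` by one and composes `σ_S` on
the left with the transposition `(a a+1)`, because that transposition preserves the order both on
`S` and on its complement. Repeating this move ends at `S = {1,…,n}`, where `σ_S = 1`. Hence
`sgn σ_S = (-1)^(ΣS + n(n+1)/2)`, and `n(n+1)/2 ≡ ⌈n/2⌉ (mod 2)`.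
-/

noncomputable section

/-- The permutation `σ_S` attached to a subset `S ⊆ {1,…,2n}` of cardinality `n`
(indices are 0-based, so `Fin (n+n)` value `i` represents the element `i+1`):
it carries `{1,…,n}` onto `S` in increasing order and `{n+1,…,2n}` onto the
complement of `S` in increasing order.  (Junk value `1` if `S.card ≠ n`.) -/
def sigmaPerm (n : ℕ) (S : Finset (Fin (n + n))) : Equiv.Perm (Fin (n + n)) :=
  if h : S.card = n then
    finSumFinEquiv.symm.trans
      ((Equiv.sumCongr (S.orderIsoOfFin h).toEquiv
          ((Sᶜ.orderIsoOfFin (by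
              rw [Finset.card_compl, h, Fintype.card_fin]; omega)).toEquiv)).trans
        ((Equiv.sumCongr (Equiv.refl _)
            (Equiv.subtypeEquivRight fun _ => Finset.mem_compl)).trans
          (Equiv.sumCompl (· ∈ S))))
  else 1

def sgnS (n : ℕ) (S : Finset (Fin (n + n))) : ℤˣ :=
  Equiv.Perm.sign (sigmaPerm n S)

open Equiv Finset

section Order

variable {α : Type*}

theorem isLowerSet_of_forall_covBy [PartialOrder α] [PredOrder α] [IsPredArchimedean α]
    {s : Set α} (h : ∀ a b, a ⋖ b → b ∈ s → a ∈ s) : IsLowerSet s := by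
  intro x y hyx hx
  refine Pred.rec (P := fun y _ => y ∈ s) hx (fun y _ hy => ?_) hyx
  by_cases hmin : IsMin y
  · rwa [hmin.pred_eq]
  · exact h _ _ (Order.pred_covBy_of_not_isMin hmin) hy

variable [LinearOrder α]

theorem strictMonoOn_swap_of_covBy {a b : α} (hab : a ⋖ b) {s : Set α}
    (hs : ¬(a ∈ s ∧ b ∈ s)) : StrictMonoOn (swap a b) s := by
  intro u hu v hv huv
  rcases eq_or_ne u a with rfl | hua
  · have hvb : v ≠ b := fun h => hs ⟨hu, h ▸ hv⟩
    rw [swap_apply_left, swap_apply_of_ne_of_ne huv.ne' hvb]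
    exact lt_of_le_of_ne (hab.ge_of_gt huv) hvb.symm
  rcases eq_or_ne u b with rfl | hub
  · have hva : v ≠ a := fun h => hs ⟨h ▸ hv, hu⟩
    rw [swap_apply_right, swap_apply_of_ne_of_ne hva huv.ne']
    exact hab.lt.trans huv
  rw [swap_apply_of_ne_of_ne hua hub]
  rcases eq_or_ne v a with rfl | hva
  · rw [swap_apply_left]
    exact huv.trans hab.lt
  rcases eq_or_ne v b with rfl | hvb
  · rw [swap_apply_right]
    exact lt_of_le_of_ne (hab.le_of_lt huv) hua
  rwa [swap_apply_of_ne_of_ne hva hvb]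

theorem orderEmbOfFin_map_swap {s : Finset α} {k : ℕ} (h : s.card = k) {a b : α}
    (hab : a ⋖ b) (hs : ¬(a ∈ s ∧ b ∈ s)) (h' : (s.map (swap a b).toEmbedding).card = k)
    (i : Fin k) :
    (s.map (swap a b).toEmbedding).orderEmbOfFin h' i = swap a b (s.orderEmbOfFin h i) := by
  refine (congrFun (orderEmbOfFin_unique h' (f := fun j => swap a b (s.orderEmbOfFin h j)) (fun j => ?_) ?_) i).symm
  · exact mem_map_of_mem _ (s.orderEmbOfFin_mem h j)
  · exact fun j j' hjj' => strictMonoOn_swap_of_covBy hab hs (s.orderEmbOfFin_mem h j)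
      (s.orderEmbOfFin_mem h j') ((s.orderEmbOfFin h).strictMono hjj')

end Order

theorem sum_map_swap_add {ι M : Type*} [DecidableEq ι] [AddCommMonoid M] {s : Finset ι}
    {a b : ι} (ha : a ∉ s) (hb : b ∈ s) (f : ι → M) :
    ∑ x ∈ s.map (swap a b).toEmbedding, f x + f b = ∑ x ∈ s, f x + f a := by
  have hfix : ∀ x ∈ s.erase b, f (swap a b x) = f x := fun x hx => by
    have hxa : x ≠ a := by rintro rfl; exact ha (mem_of_mem_erase hx)
    rw [swap_apply_of_ne_of_ne hxa (ne_of_mem_erase hx)]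
  rw [sum_map, ← sum_erase_add s _ hb, ← sum_erase_add s f hb]
  simp only [coe_toEmbedding]
  rw [sum_congr rfl hfix, swap_apply_right, add_right_comm]

theorem Fin.val_add_one_of_covBy {m : ℕ} {a b : Fin m} (hab : a ⋖ b) :
    (b : ℕ) = a + 1 := by
  by_contra hne
  have hlt : (a : ℕ) + 1 < b := by have := Fin.lt_def.mp hab.lt; omega
  exact hab.2 (c := ⟨a + 1, by omega⟩) (Fin.lt_def.mpr (by simp)) (Fin.lt_def.mpr hlt)

section SigmaPerm

variable {n : ℕ} {S : Finset (Fin (n + n))}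

theorem card_compl_of_card_eq (hS : S.card = n) : Sᶜ.card = n := by
  rw [card_compl, hS, Fintype.card_fin]; omega

theorem sigmaPerm_castAdd (hS : S.card = n) (i : Fin n) :
    sigmaPerm n S (Fin.castAdd n i) = S.orderEmbOfFin hS i := by
  rw [sigmaPerm, dif_pos hS, trans_apply, finSumFinEquiv_symm_apply_castAdd]
  simp [coe_orderIsoOfFin_apply]

theorem sigmaPerm_natAdd (hS : S.card = n) (i : Fin n) :
    sigmaPerm n S (Fin.natAdd n i) = Sᶜ.orderEmbOfFin (card_compl_of_card_eq hS) i := by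
  rw [sigmaPerm, dif_pos hS, trans_apply, finSumFinEquiv_symm_apply_natAdd]
  simp [coe_orderIsoOfFin_apply]

theorem sigmaPerm_map_swap (hS : S.card = n) {a b : Fin (n + n)} (hab : a ⋖ b) (ha : a ∉ S)
    (hb : b ∈ S) : sigmaPerm n (S.map (swap a b).toEmbedding) = swap a b * sigmaPerm n S := by
  have hS' : (S.map (swap a b).toEmbedding).card = n := by rwa [card_map]
  have hcompl : (S.map (swap a b).toEmbedding)ᶜ = Sᶜ.map (swap a b).toEmbedding := by
    ext x
    simp only [mem_compl, mem_map_equiv, symm_swap]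
  ext x
  induction x using Fin.addCases with
  | left i =>
    rw [Perm.mul_apply, sigmaPerm_castAdd hS', sigmaPerm_castAdd hS,
      orderEmbOfFin_map_swap hS hab (fun h => ha h.1)]
  | right i =>
    rw [Perm.mul_apply, sigmaPerm_natAdd hS', sigmaPerm_natAdd hS]
    simp only [hcompl]
    rw [orderEmbOfFin_map_swap _ hab (fun h => mem_compl.mp h.2 hb)]

theorem sgnS_map_swap (hS : S.card = n) {a b : Fin (n + n)} (hab : a ⋖ b) (ha : a ∉ S)
    (hb : b ∈ S) : sgnS n (S.map (swap a b).toEmbedding) = -sgnS n S := by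
  rw [sgnS, sgnS, sigmaPerm_map_swap hS hab ha hb, map_mul, Perm.sign_swap hab.ne, neg_one_mul]

end SigmaPerm

def lowerHalf (n : ℕ) : Finset (Fin (n + n)) :=
  univ.map (Fin.castAddOrderEmb n).toEmbedding

theorem mem_lowerHalf {n : ℕ} {x : Fin (n + n)} : x ∈ lowerHalf n ↔ (x : ℕ) < n := by
  refine ⟨fun hx => ?_, fun hx => mem_map.mpr ⟨⟨x, hx⟩, mem_univ _, rfl⟩⟩
  obtain ⟨i, -, rfl⟩ := mem_map.mp hx
  exact i.isLt

theorem card_lowerHalf (n : ℕ) : (lowerHalf n).card = n := by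
  rw [lowerHalf, card_map, card_univ, Fintype.card_fin]

theorem eq_lowerHalf_of_isLowerSet {n : ℕ} {S : Finset (Fin (n + n))}
    (hlow : IsLowerSet (S : Set (Fin (n + n)))) (hS : S.card = n) : S = lowerHalf n := by
  refine eq_of_subset_of_card_le (fun x hx => mem_lowerHalf.mpr ?_) (by rw [hS, card_lowerHalf])
  have hIic : Iic x ⊆ S := fun y hy => hlow (mem_Iic.mp hy) hx
  have := card_le_card hIic
  rw [Fin.card_Iic, hS] at this
  omega

theorem sigmaPerm_lowerHalf (n : ℕ) : sigmaPerm n (lowerHalf n) = 1 := by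
  have hleft : ⇑(Fin.castAddOrderEmb n) = (lowerHalf n).orderEmbOfFin (card_lowerHalf n) :=
    congrArg _ (orderEmbOfFin_unique' _ fun i => mem_lowerHalf.mpr (by simp))
  have hright : ⇑(Fin.natAddOrderEmb n) =
      (lowerHalf n)ᶜ.orderEmbOfFin (card_compl_of_card_eq (card_lowerHalf n)) :=
    congrArg _ (orderEmbOfFin_unique' _ fun i => mem_compl.mpr (mem_lowerHalf.not.mpr (by simp)))
  ext x
  induction x using Fin.addCases with
  | left i => rw [sigmaPerm_castAdd (card_lowerHalf n), ← hleft]; rfl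
  | right i => rw [sigmaPerm_natAdd (card_lowerHalf n), ← hright]; rfl

theorem sgnS_eq_neg_one_pow {n : ℕ} {S : Finset (Fin (n + n))} (hS : S.card = n) :
    sgnS n S = (-1) ^ (∑ i ∈ S, ((i : ℕ) + 1) + ∑ i ∈ lowerHalf n, ((i : ℕ) + 1)) := by
  obtain ⟨N, hN⟩ : ∃ N, ∑ i ∈ S, ((i : ℕ) + 1) = N := ⟨_, rfl⟩
  induction N using Nat.strong_induction_on generalizing S with
  | _ N ih =>
  by_cases hgap : ∃ a b, a ⋖ b ∧ a ∉ S ∧ b ∈ S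
  · obtain ⟨a, b, hab, ha, hb⟩ := hgap
    have hsum := sum_map_swap_add ha hb (fun i => (i : ℕ) + 1)
    simp only [Fin.val_add_one_of_covBy hab] at hsum
    have hS' : (S.map (swap a b).toEmbedding).card = n := by rwa [card_map]
    rw [← neg_neg (sgnS n S), ← sgnS_map_swap hS hab ha hb, ih _ (by omega) hS' rfl, hN,
      show N = ∑ i ∈ S.map (swap a b).toEmbedding, ((i : ℕ) + 1) + 1 by omega,
      add_right_comm, pow_succ, mul_neg_one]
  · have hlow := isLowerSet_of_forall_covBy fun a b hab hb =>
      by_contra fun ha => hgap ⟨a, b, hab, ha, hb⟩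
    rw [eq_lowerHalf_of_isLowerSet hlow hS, sgnS, sigmaPerm_lowerHalf, map_one,
      Even.neg_one_pow ⟨_, rfl⟩]

theorem even_sum_range_add_one_add_half (n : ℕ) :
    Even (∑ i ∈ range n, (i + 1) + (n + 1) / 2) := by
  induction n using Nat.twoStepInduction with
  | zero => decide
  | one => decide
  | more n ih _ =>
    obtain ⟨k, hk⟩ := ih
    exact ⟨k + n + 2, by rw [sum_range_succ, sum_range_succ]; omega⟩

theorem sum_lowerHalf (n : ℕ) :
    ∑ i ∈ lowerHalf n, ((i : ℕ) + 1) = ∑ i ∈ range n, (i + 1) := by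
  rw [lowerHalf, sum_map, ← Fin.sum_univ_eq_sum_range]
  rfl

theorem ceil_natCast_div_two (n : ℕ) : ⌈(n : ℚ) / 2⌉ = (((n + 1) / 2 : ℕ) : ℤ) := by
  rw [show ((2 : ℚ)) = ((2 : ℕ) : ℚ) by norm_num, Rat.ceil_natCast_div_natCast]
  omega

theorem stmt0_general (n : ℕ) (S : Finset (Fin (n + n))) (hS : S.card = n) :
    sgnS n S =
      (-1 : ℤˣ) ^ (((∑ i ∈ S, ((i : ℕ) + 1) : ℕ) : ℤ) + ⌈(n : ℚ) / 2⌉) := by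
  rw [ceil_natCast_div_two, ← Nat.cast_add, zpow_natCast, sgnS_eq_neg_one_pow hS, sum_lowerHalf]
  refine neg_one_pow_congr ?_
  have := Nat.even_iff.mp (even_sum_range_add_one_add_half n)
  rw [Nat.even_iff, Nat.even_iff]
  omega

/-- For `S ⊆ {1,…,2n}` of cardinality `n`, `sgn(σ_S) = (−1)^(ΣS + ⌈n/2⌉)`. -/
theorem stmt0 (n : ℕ) (hn : 1 ≤ n) (S : Finset (Fin (n + n))) (hS : S.card = n) :
    sgnS n S =
      (-1 : ℤˣ) ^ (((∑ i ∈ S, ((i : ℕ) + 1) : ℕ) : ℤ) + ⌈(n : ℚ) / 2⌉) :=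
  stmt0_general n S hS
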